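/- arXiv:1708.02281 — 2 statements merged into one kernel-verified Lean document; each statement's English description precedes it below -/
import Mathlib

section
/- For every r ≥ 0 and every unit vector u = (u₁,u₂) ∈ ℝ², one has ∫_{-π}^{π} cos²t · exp(i r (u₁ cos t + u₂ sin t)) dt = π J₀(r) + (1 − 2u₁²) π J₂(r). -/
open Real MeasureTheory

/-- Bessel function of the first kind of order `n`, defined by its power series. -/
noncomputable def besselJ (n : ℕ) (t : ℝ) : ℝ :=
  ∑' m : ℕ, ((-1 : ℝ) ^ m / (Nat.factorial m * Nat.factorial (m + n))) * (t / 2) ^ (2 * m + n)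

/-!
Write `u = (cos φ, sin φ)`, so that `u₁ cos t + u₂ sin t = cos (t - φ)`, and shift `t ↦ t + φ`
using `2π`-periodicity. Since `cos² (t + φ) = 1/2 + cos 2φ cos 2t / 2 - sin 2φ sin 2t / 2`, and the
`sin 2t` part is odd, the integral reduces to the two Bessel integrals
`∫ e^{i r cos t} dt = 2π J₀(r)` and `∫ cos 2t e^{i r cos t} dt = -2π J₂(r)`.
These follow by expanding the exponential, integrating term by term (dominated convergence), and
evaluating the moments `∫ cos^k` with the Wallis recursion.
-/

open Nat Complex in
theorem hasSum_intervalIntegral_mul_cexp_mul {a b : ℝ} {g h : ℝ → ℝ} (hg : Continuous g)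
    (hh : Continuous h) (c : ℂ) :
    HasSum (fun n : ℕ => c ^ n / n ! * ((∫ x in a..b, g x * h x ^ n : ℝ) : ℂ))
      (∫ x in a..b, (g x : ℂ) * cexp (c * h x)) := by
  have hterm (n : ℕ) : c ^ n / n ! * ((∫ x in a..b, g x * h x ^ n : ℝ) : ℂ) =
      ∫ x in a..b, (g x : ℂ) * ((c * h x) ^ n / n !) := by
    rw [← intervalIntegral.integral_ofReal, ← intervalIntegral.integral_const_mul]
    congr 1 with x
    push_cast
    ring
  simp only [hterm]
  refine intervalIntegral.hasSum_integral_of_dominated_convergence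
    (fun n x => ‖(g x : ℂ)‖ * (‖c * h x‖ ^ n / n !))
    (fun n => (by fun_prop : Continuous _).aestronglyMeasurable)
    (fun n => .of_forall fun x _ => by rw [norm_mul, norm_div, norm_pow, Complex.norm_natCast])
    (.of_forall fun x _ => (Real.summable_pow_div_factorial _).mul_left _) ?_
    (.of_forall fun x _ => ?_)
  · have hbound (x : ℝ) : ∑' n : ℕ, ‖(g x : ℂ)‖ * (‖c * h x‖ ^ n / n !) =
        ‖(g x : ℂ)‖ * Real.exp ‖c * h x‖ := by
      rw [tsum_mul_left, Real.exp_eq_exp_ℝ, (NormedSpace.expSeries_div_hasSum_exp _).tsum_eq]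
    simp only [hbound]
    exact Continuous.intervalIntegrable (by fun_prop) _ _
  · rw [exp_eq_exp_ℂ]
    exact (NormedSpace.expSeries_div_hasSum_exp (c * h x)).mul_left (g x : ℂ)

noncomputable def cosMoment (n : ℕ) : ℝ := ∫ x in -π..π, cos x ^ n

theorem cosMoment_add_two (n : ℕ) : cosMoment (n + 2) = (n + 1) / (n + 2) * cosMoment n := by
  simp [cosMoment, integral_cos_pow]

theorem cosMoment_two_mul_add_one (m : ℕ) : cosMoment (2 * m + 1) = 0 := by
  induction m with
  | zero => simp [cosMoment]
  | succ m ih => rw [show 2 * (m + 1) + 1 = 2 * m + 1 + 2 by ring, cosMoment_add_two, ih, mul_zero]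

open Nat in
theorem cosMoment_two_mul (m : ℕ) :
    cosMoment (2 * m) = 2 * π * (2 * m)! / (4 ^ m * (m ! : ℝ) ^ 2) := by
  induction m with
  | zero => simp [cosMoment, two_mul]
  | succ m ih =>
    rw [show 2 * (m + 1) = 2 * m + 2 by ring, cosMoment_add_two, ih, factorial_succ,
      factorial_succ, factorial_succ]
    push_cast
    field_simp
    ring

theorem integral_cos_two_mul_mul_cos_pow (n : ℕ) :
    ∫ x in -π..π, cos (2 * x) * cos x ^ n = n / (n + 2) * cosMoment n := by
  have h (x : ℝ) : cos (2 * x) * cos x ^ n = 2 * cos x ^ (n + 2) - cos x ^ n := by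
    rw [cos_two_mul]; ring
  simp only [h]
  rw [intervalIntegral.integral_sub, intervalIntegral.integral_const_mul]
  · rw [← cosMoment, ← cosMoment, cosMoment_add_two]
    field_simp
    ring
  all_goals exact Continuous.intervalIntegrable (by fun_prop) _ _

theorem eq_ofReal_tsum_of_hasSum {f : ℕ → ℝ} {z : ℂ} (h : HasSum (fun n => (f n : ℂ)) z) :
    z = ↑(∑' n, f n) := by
  rw [Complex.ofReal_tsum, h.tsum_eq]

open Complex in
theorem I_mul_ofReal_pow_two_mul (r : ℝ) (m : ℕ) :
    (I * r) ^ (2 * m) = ((-1) ^ m * r ^ (2 * m) : ℝ) := by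
  rw [pow_mul, mul_pow, I_sq]
  push_cast
  ring

open Nat Complex in
theorem integral_cexp_I_mul_cos (r : ℝ) :
    ∫ x in -π..π, cexp (I * r * Real.cos x) = ((2 * π * besselJ 0 r : ℝ) : ℂ) := by
  have h := hasSum_intervalIntegral_mul_cexp_mul (a := -π) (b := π) (continuous_const (y := 1))
    continuous_cos (I * r)
  have hmoment (n : ℕ) : (∫ x in -π..π, Real.cos x ^ n) = cosMoment n := rfl
  simp only [ofReal_one, one_mul, hmoment] at h
  rw [← (mul_right_injective₀ (two_ne_zero' ℕ)).hasSum_iff] at h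
  · have hterm (m : ℕ) : (I * r) ^ (2 * m) / (2 * m)! * (cosMoment (2 * m) : ℂ) =
        ((2 * π * ((-1) ^ m / (m ! * (m + 0)!) * (r / 2) ^ (2 * m + 0)) : ℝ) : ℂ) := by
      rw [I_mul_ofReal_pow_two_mul, cosMoment_two_mul, add_zero, add_zero, div_pow,
        pow_mul (2 : ℝ) 2 m]
      have hfac := (Nat.cast_ne_zero (R := ℂ)).mpr (factorial_ne_zero (2 * m))
      push_cast
      field_simp
      ring
    simp only [Function.comp_def, hterm] at h
    rw [eq_ofReal_tsum_of_hasSum h, tsum_mul_left, besselJ]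
  · intro k hk
    have hodd : ¬ Even k := fun ⟨m, hm⟩ => hk ⟨m, (two_mul m).trans hm.symm⟩
    obtain ⟨m, rfl⟩ := Nat.not_even_iff_odd.mp hodd
    rw [cosMoment_two_mul_add_one, ofReal_zero, mul_zero]

open Nat Complex in
theorem integral_cos_two_mul_mul_cexp_I_mul_cos (r : ℝ) :
    ∫ x in -π..π, (Real.cos (2 * x) : ℂ) * cexp (I * r * Real.cos x) =
      ((-(2 * π * besselJ 2 r) : ℝ) : ℂ) := by
  have h := hasSum_intervalIntegral_mul_cexp_mul (a := -π) (b := π)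
    (g := fun x => Real.cos (2 * x)) (by fun_prop) continuous_cos (I * r)
  simp only [integral_cos_two_mul_mul_cos_pow] at h
  -- only `k = 2 (j + 1)` contributes: odd moments vanish and the `k = 0` term has the factor `k / (k + 2)`
  have hinj : Function.Injective fun j : ℕ => 2 * (j + 1) :=
    (mul_right_injective₀ (two_ne_zero' ℕ)).comp (add_left_injective 1)
  rw [← hinj.hasSum_iff] at h
  · have hterm (j : ℕ) : (I * r) ^ (2 * (j + 1)) / (2 * (j + 1))! *
        ((((2 * (j + 1) : ℕ) : ℝ) / ((2 * (j + 1) : ℕ) + 2) * cosMoment (2 * (j + 1)) : ℝ) : ℂ) =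
        ((-(2 * π * ((-1) ^ j / (j ! * (j + 2)!) * (r / 2) ^ (2 * j + 2))) : ℝ) : ℂ) := by
      rw [I_mul_ofReal_pow_two_mul, cosMoment_two_mul, div_pow,
        show 2 * j + 2 = 2 * (j + 1) by ring, pow_mul (2 : ℝ) 2 (j + 1), factorial_succ (j + 1),
        factorial_succ j]
      have hfac := (Nat.cast_ne_zero (R := ℂ)).mpr (factorial_ne_zero (2 * (j + 1)))
      have hj : (j : ℂ) + 2 ≠ 0 := by exact_mod_cast (j + 1).succ_ne_zero
      push_cast
      field_simp
      ring
    simp only [Function.comp_def, hterm] at h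
    rw [eq_ofReal_tsum_of_hasSum h, tsum_neg, tsum_mul_left, besselJ]
  · intro k hk
    rcases Nat.even_or_odd' k with ⟨m, rfl | rfl⟩
    · rcases m with _ | j
      · simp
      · exact absurd ⟨j, rfl⟩ hk
    · rw [cosMoment_two_mul_add_one, mul_zero, ofReal_zero, mul_zero]

theorem integral_neg_self_eq_zero_of_odd {E : Type*} [NormedAddCommGroup E] [NormedSpace ℝ E]
    {f : ℝ → E} (hf : ∀ x, f (-x) = -f x) (a : ℝ) : ∫ x in -a..a, f x = 0 := by
  have h := intervalIntegral.integral_comp_neg (a := -a) (b := a) f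
  simp only [hf, intervalIntegral.integral_neg, neg_neg] at h
  have h2 : (2 : ℝ) • ∫ x in -a..a, f x = 0 := by
    rw [two_smul]; nth_rw 1 [← h]; exact neg_add_cancel _
  exact (smul_eq_zero.mp h2).resolve_left two_ne_zero

open Complex in
theorem integral_sin_two_mul_mul_cexp_I_mul_cos (r : ℝ) :
    ∫ x in -π..π, (Real.sin (2 * x) : ℂ) * cexp (I * r * Real.cos x) = 0 :=
  integral_neg_self_eq_zero_of_odd (fun x => by simp [mul_neg]) π

open Complex in
theorem integral_cos_add_sq_mul_cexp_I_mul_cos (φ r : ℝ) :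
    ∫ x in -π..π, ((Real.cos (x + φ) ^ 2 : ℝ) : ℂ) * cexp (I * r * Real.cos x) =
      ((π * besselJ 0 r - Real.cos (2 * φ) * π * besselJ 2 r : ℝ) : ℂ) := by
  have hsplit (x : ℝ) : ((Real.cos (x + φ) ^ 2 : ℝ) : ℂ) * cexp (I * r * Real.cos x) =
      (1 / 2 : ℂ) * cexp (I * r * Real.cos x) +
        (Real.cos (2 * φ) / 2 : ℂ) * (Real.cos (2 * x) * cexp (I * r * Real.cos x)) -
        (Real.sin (2 * φ) / 2 : ℂ) * (Real.sin (2 * x) * cexp (I * r * Real.cos x)) := by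
    have h : Real.cos (x + φ) ^ 2 = 1 / 2 + Real.cos (2 * φ) / 2 * Real.cos (2 * x) -
        Real.sin (2 * φ) / 2 * Real.sin (2 * x) := by
      rw [Real.cos_sq, show 2 * (x + φ) = 2 * x + 2 * φ by ring, Real.cos_add]
      ring
    rw [h]
    push_cast
    ring
  simp only [hsplit]
  rw [intervalIntegral.integral_sub, intervalIntegral.integral_add,
    intervalIntegral.integral_const_mul, intervalIntegral.integral_const_mul,
    intervalIntegral.integral_const_mul, integral_cexp_I_mul_cos,
    integral_cos_two_mul_mul_cexp_I_mul_cos, integral_sin_two_mul_mul_cexp_I_mul_cos]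
  · push_cast
    ring
  all_goals exact Continuous.intervalIntegrable (by fun_prop) _ _

theorem Function.Periodic.intervalIntegral_comp_add_right {E : Type*} [NormedAddCommGroup E]
    [NormedSpace ℝ E] {f : ℝ → E} {T : ℝ} (hf : Function.Periodic f T) (a d : ℝ) :
    ∫ x in a..a + T, f (x + d) = ∫ x in a..a + T, f x := by
  rw [intervalIntegral.integral_comp_add_right, add_right_comm, hf.intervalIntegral_add_eq]

theorem exists_cos_eq_and_sin_eq {u₁ u₂ : ℝ} (hu : u₁ ^ 2 + u₂ ^ 2 = 1) :
    ∃ φ, Real.cos φ = u₁ ∧ Real.sin φ = u₂ := by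
  set z : ℂ := ⟨u₁, u₂⟩
  have hz : ‖z‖ = 1 := by
    rw [Complex.norm_def, Complex.normSq_mk, ← sq, ← sq, hu, Real.sqrt_one]
  have hz0 : z ≠ 0 := norm_ne_zero_iff.mp (hz ▸ one_ne_zero)
  exact ⟨z.arg, by rw [Complex.cos_arg hz0, hz, div_one], by rw [Complex.sin_arg, hz, div_one]⟩

theorem circle_integral_cos_sq_exp_general (r : ℝ) (u₁ u₂ : ℝ)
    (hu : u₁ ^ 2 + u₂ ^ 2 = 1) :
    ∫ t in (-Real.pi)..Real.pi,
        ((Real.cos t ^ 2 : ℝ) : ℂ) *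
          Complex.exp (Complex.I * (r : ℂ) *
            ((u₁ * Real.cos t + u₂ * Real.sin t : ℝ) : ℂ)) =
      ((Real.pi * besselJ 0 r + (1 - 2 * u₁ ^ 2) * Real.pi * besselJ 2 r : ℝ) : ℂ) := by
  obtain ⟨φ, rfl, rfl⟩ := exists_cos_eq_and_sin_eq hu
  have hrot (t : ℝ) : Real.cos φ * Real.cos t + Real.sin φ * Real.sin t = Real.cos (t - φ) := by
    rw [Real.cos_sub]; ring
  set F : ℝ → ℂ := fun t =>
    ((Real.cos t ^ 2 : ℝ) : ℂ) * Complex.exp (Complex.I * r * Real.cos (t - φ))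
  have hF : Function.Periodic F (2 * π) := fun t => by
    simp only [F, add_sub_right_comm, Real.cos_add_two_pi]
  have hshift := hF.intervalIntegral_comp_add_right (-π) φ
  rw [show -π + 2 * π = π by ring] at hshift
  simp only [F, add_sub_cancel_right] at hshift
  simp only [hrot]
  rw [← hshift, integral_cos_add_sq_mul_cexp_I_mul_cos, Real.cos_two_mul]
  push_cast
  ring

/-- For every `r ≥ 0` and every unit vector `(u₁, u₂) ∈ ℝ²`,
`∫_{-π}^{π} cos²t · exp(i r (u₁ cos t + u₂ sin t)) dt = π J₀(r) + (1 − 2u₁²) π J₂(r)`. -/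
theorem circle_integral_cos_sq_exp (r : ℝ) (hr : 0 ≤ r) (u₁ u₂ : ℝ)
    (hu : u₁ ^ 2 + u₂ ^ 2 = 1) :
    ∫ t in (-Real.pi)..Real.pi,
        ((Real.cos t ^ 2 : ℝ) : ℂ) *
          Complex.exp (Complex.I * (r : ℂ) *
            ((u₁ * Real.cos t + u₂ * Real.sin t : ℝ) : ℂ)) =
      ((Real.pi * besselJ 0 r + (1 - 2 * u₁ ^ 2) * Real.pi * besselJ 2 r : ℝ) : ℂ) :=
  circle_integral_cos_sq_exp_general r u₁ u₂ hu
end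

section
/- Fix integers a₁, a₂, a₃, a₄ ∈ {0,1,2} and integers 1 ≤ b₁, b₂, b₃, b₄ ≤ 3 with b₁ + b₂ + b₃ + b₄ = 8. Define, for E > 1, u_E := (E²/(log E)²) ∫_{D⁴} |J_{a₁}(2π√E ‖x₁ − x₂‖)|^{b₁} |J_{a₂}(2π√E ‖x₂ − x₃‖)|^{b₂} |J_{a₃}(2π√E ‖x₃ − x₄‖)|^{b₃} |J_{a₄}(2π√E ‖x₄ − x₁‖)|^{b₄} dx₁ dx₂ dx₃ dx₄. Then u_E → 0 as E → ∞. -/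
/-!
By the energy method for Bessel's equation, `|J_n(t)| ≤ C t^(-1/2)` for `t > 0`. As
`∑ bᵢ/2 = 4`, the integrand is then at most `C (2π√E)^(-4) ∏ ‖xᵢ - xᵢ₊₁‖^(-bᵢ/2)`, so the integral
is `O(E⁻²)` and `u_E = O(1/log² E)`, provided the cyclic Riesz integral
`∫_{D⁴} ∏ ‖xᵢ - xᵢ₊₁‖^(-bᵢ/2)` is finite. That integral is bounded by integrating out `x₄`, `x₃`,
`x₂` in turn; merging two singularities by
`‖x - a‖^(-s) ‖x - c‖^(-t) ≤ 2^θ ‖a - c‖^(-θ) (‖x - a‖^(-(s+t-θ)) + ‖x - c‖^(-(s+t-θ)))`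
keeps every exponent below the dimension `2`.
-/

open Real MeasureTheory Filter

open Set Metric
open scoped ENNReal

noncomputable def besselCoeff (n m : ℕ) : ℝ :=
  (-1 : ℝ) ^ m / (Nat.factorial m * Nat.factorial (m + n))

/-- The `m`-th term of the `j`-th termwise derivative of `besselJ n`. For `j > 2 * m + n` the
truncated exponent is harmless: the factor `descFactorial` vanishes. -/
noncomputable def besselJDerivTerm (j n m : ℕ) (t : ℝ) : ℝ :=
  besselCoeff n m * ((2 * m + n).descFactorial j / 2 ^ j) * (t / 2) ^ (2 * m + n - j)

noncomputable def besselJDeriv (j n : ℕ) (t : ℝ) : ℝ := ∑' m, besselJDerivTerm j n m t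

@[simp] lemma besselJDerivTerm_zero (n m : ℕ) (t : ℝ) :
    besselJDerivTerm 0 n m t = besselCoeff n m * (t / 2) ^ (2 * m + n) := by
  simp [besselJDerivTerm]

lemma besselJDeriv_zero (n : ℕ) : besselJDeriv 0 n = besselJ n := by
  ext t
  simp [besselJDeriv, besselJ, besselCoeff]

lemma abs_besselCoeff_le (n m : ℕ) : |besselCoeff n m| ≤ 1 / Nat.factorial m := by
  rw [besselCoeff, abs_div, abs_pow, abs_neg, abs_one, one_pow, abs_of_pos (by positivity)]
  gcongr
  exact le_mul_of_one_le_right (by positivity)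
    (mod_cast Nat.one_le_iff_ne_zero.2 (Nat.factorial_ne_zero _))

lemma besselCoeff_succ (n m : ℕ) :
    besselCoeff n (m + 1) * ((m + 1) * (m + 1 + n)) = -besselCoeff n m := by
  rw [besselCoeff, besselCoeff, show m + 1 + n = m + n + 1 by ring, Nat.factorial_succ,
    Nat.factorial_succ]
  push_cast
  field_simp
  ring

lemma abs_besselJDerivTerm_le {M t : ℝ} (hM : 1 ≤ M) (ht : |t| ≤ 2 * M) (j n m : ℕ) :
    |besselJDerivTerm j n m t| ≤ (2 ^ j * M) ^ (2 * m + n) / Nat.factorial m := by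
  set k := 2 * m + n
  have hdesc : (k.descFactorial j : ℝ) / 2 ^ j ≤ (2 ^ j) ^ k := by
    calc (k.descFactorial j : ℝ) / 2 ^ j ≤ k.descFactorial j :=
          div_le_self (by positivity) (one_le_pow₀ one_le_two)
      _ ≤ ((2 ^ k) ^ j : ℕ) := by
          exact_mod_cast (Nat.descFactorial_le_pow k j).trans
            (Nat.pow_le_pow_left Nat.lt_two_pow_self.le j)
      _ = (2 ^ j) ^ k := by push_cast; rw [← pow_mul, ← pow_mul, mul_comm]
  have hpow : |(t / 2) ^ (k - j)| ≤ M ^ k := by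
    rw [abs_pow]
    calc |t / 2| ^ (k - j) ≤ M ^ (k - j) :=
          pow_le_pow_left₀ (abs_nonneg _) (by rw [abs_div, abs_two]; linarith) _
      _ ≤ M ^ k := pow_le_pow_right₀ hM (Nat.sub_le _ _)
  calc |besselJDerivTerm j n m t|
      = |besselCoeff n m| * ((k.descFactorial j : ℝ) / 2 ^ j) * |(t / 2) ^ (k - j)| := by
        rw [besselJDerivTerm, abs_mul, abs_mul, abs_of_nonneg (by positivity : (0 : ℝ) ≤ _ / 2 ^ j)]
    _ ≤ 1 / Nat.factorial m * (2 ^ j) ^ k * M ^ k := by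
        gcongr
        exact abs_besselCoeff_le n m
    _ = (2 ^ j * M) ^ k / Nat.factorial m := by ring

lemma summable_pow_two_mul_add_div_factorial (x : ℝ) (n : ℕ) :
    Summable fun m : ℕ => x ^ (2 * m + n) / Nat.factorial m := by
  refine ((Real.summable_pow_div_factorial (x ^ 2)).mul_left (x ^ n)).congr fun m => ?_
  rw [pow_add, pow_mul]
  ring

lemma summable_besselJDerivTerm (j n : ℕ) (t : ℝ) : Summable fun m => besselJDerivTerm j n m t :=
  .of_norm_bounded (summable_pow_two_mul_add_div_factorial (2 ^ j * max 1 |t|) n) fun m => by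
    rw [Real.norm_eq_abs]
    exact abs_besselJDerivTerm_le (le_max_left _ _)
      (by linarith [le_max_right 1 |t|, abs_nonneg t]) j n m

lemma hasDerivAt_besselJDerivTerm (j n m : ℕ) (t : ℝ) :
    HasDerivAt (besselJDerivTerm j n m) (besselJDerivTerm (j + 1) n m t) t := by
  refine ((((hasDerivAt_id' t).div_const 2).fun_pow (2 * m + n - j)).const_mul
    (besselCoeff n m * ((2 * m + n).descFactorial j / 2 ^ j))).congr_deriv ?_
  rw [besselJDerivTerm, Nat.descFactorial_succ, Nat.sub_sub]
  push_cast
  ring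

lemma hasDerivAt_besselJDeriv (j n : ℕ) (t : ℝ) :
    HasDerivAt (besselJDeriv j n) (besselJDeriv (j + 1) n t) t := by
  set r := |t| + 1
  have hr : 1 ≤ r := by linarith [abs_nonneg t]
  have hball : ∀ y ∈ ball (0 : ℝ) r, |y| ≤ 2 * r := fun y hy => by
    rw [mem_ball_zero_iff, Real.norm_eq_abs] at hy
    linarith
  exact hasDerivAt_tsum_of_isPreconnected (g := fun m => besselJDerivTerm j n m)
    (g' := fun m => besselJDerivTerm (j + 1) n m)
    (summable_pow_two_mul_add_div_factorial (2 ^ (j + 1) * r) n) isOpen_ball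
    (convex_ball 0 r).isPreconnected (fun m y _ => hasDerivAt_besselJDerivTerm j n m y)
    (fun m y hy => abs_besselJDerivTerm_le hr (hball y hy) (j + 1) n m)
    (mem_ball_self (by linarith)) (summable_besselJDerivTerm j n 0)
    (by rw [mem_ball_zero_iff, Real.norm_eq_abs]; linarith)

lemma hasDerivAt_besselJ (n : ℕ) (t : ℝ) : HasDerivAt (besselJ n) (besselJDeriv 1 n t) t := by
  simpa [besselJDeriv_zero] using hasDerivAt_besselJDeriv 0 n t

lemma pow_mul_besselJDerivTerm (j n m : ℕ) (t : ℝ) :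
    t ^ j * besselJDerivTerm j n m t =
      besselCoeff n m * (2 * m + n).descFactorial j * (t / 2) ^ (2 * m + n) := by
  rcases le_or_gt j (2 * m + n) with h | h
  · obtain ⟨r, hr⟩ := Nat.exists_eq_add_of_le' h
    rw [besselJDerivTerm, hr, Nat.add_sub_cancel, pow_add, div_pow t 2 j]
    field_simp
  · simp [besselJDerivTerm, Nat.descFactorial_eq_zero_iff_lt.2 h]

lemma Nat.descFactorial_two_add_self (k : ℕ) : k.descFactorial 2 + k = k ^ 2 := by
  cases k <;> simp [Nat.descFactorial_succ]
  ring

lemma besselJDerivTerm_ode (n m : ℕ) (t : ℝ) :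
    t ^ 2 * besselJDerivTerm 2 n m t + t * besselJDerivTerm 1 n m t -
        n ^ 2 * besselJDerivTerm 0 n m t =
      4 * (m * (m + n)) * besselCoeff n m * (t / 2) ^ (2 * m + n) := by
  have h1 := pow_mul_besselJDerivTerm 1 n m t
  have h2 := pow_mul_besselJDerivTerm 2 n m t
  have hk : ((2 * m + n).descFactorial 2 : ℝ) + (2 * m + n : ℕ) = (2 * m + n : ℕ) ^ 2 := by
    exact_mod_cast Nat.descFactorial_two_add_self (2 * m + n)
  simp only [pow_one, Nat.descFactorial_one] at h1
  rw [besselJDerivTerm_zero]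
  push_cast at hk h1 h2 ⊢
  linear_combination h2 + h1 + besselCoeff n m * (t / 2) ^ (2 * m + n) * hk

lemma besselJ_ode (n : ℕ) (t : ℝ) :
    t ^ 2 * besselJDeriv 2 n t + t * besselJDeriv 1 n t + (t ^ 2 - n ^ 2) * besselJ n t = 0 := by
  set T : ℕ → ℕ → ℝ := fun j m => besselJDerivTerm j n m t
  set e : ℕ → ℝ := fun m => t ^ 2 * T 2 m + t * T 1 m - n ^ 2 * T 0 m
  have hT : ∀ j, Summable (T j) := fun j => summable_besselJDerivTerm j n t
  have he : Summable e := (((hT 2).mul_left _).add ((hT 1).mul_left _)).sub ((hT 0).mul_left _)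
  have he_succ : ∀ m, e (m + 1) = -(t ^ 2 * T 0 m) := fun m => by
    have hc := besselCoeff_succ n m
    simp only [e, T]
    rw [besselJDerivTerm_ode, besselJDerivTerm_zero, show 2 * (m + 1) + n = 2 * m + n + 2 by ring,
      pow_add]
    push_cast
    linear_combination (4 * (t / 2) ^ (2 * m + n) * (t / 2) ^ 2) * hc
  calc t ^ 2 * besselJDeriv 2 n t + t * besselJDeriv 1 n t + (t ^ 2 - n ^ 2) * besselJ n t
      = ∑' m, e m + t ^ 2 * ∑' m, T 0 m := by
        rw [← besselJDeriv_zero, besselJDeriv, besselJDeriv, besselJDeriv,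
          (((hT 2).mul_left _).add ((hT 1).mul_left _)).tsum_sub ((hT 0).mul_left _),
          ((hT 2).mul_left _).tsum_add ((hT 1).mul_left _), tsum_mul_left, tsum_mul_left,
          tsum_mul_left]
        ring
    _ = 0 := by
        rw [he.tsum_eq_zero_add, tsum_congr he_succ, tsum_neg, tsum_mul_left]
        simp only [e, T]
        rw [besselJDerivTerm_ode]
        simp

/-- The factor `exp (|c| / t)` absorbs the perturbation `c / t²` of the harmonic oscillator. -/
lemma antitoneOn_perturbedOscillator_energy {u v : ℝ → ℝ} {c : ℝ}
    (hu : ∀ t > 0, HasDerivAt u (v t) t) (hv : ∀ t > 0, HasDerivAt v (-(1 + c / t ^ 2) * u t) t) :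
    AntitoneOn (fun t => (u t ^ 2 + v t ^ 2) * exp (|c| / t)) (Ioi 0) := by
  have hW : ∀ t > 0, HasDerivAt (fun t => (u t ^ 2 + v t ^ 2) * exp (|c| / t))
      (-(exp (|c| / t) / t ^ 2) * (2 * c * u t * v t + |c| * (u t ^ 2 + v t ^ 2))) t := by
    intro t ht
    have hinv : HasDerivAt (fun t => |c| / t) (-|c| / t ^ 2) t := by
      simpa [div_eq_mul_inv, neg_div] using (hasDerivAt_inv ht.ne').const_mul |c|
    refine (((hu t ht).fun_pow 2).fun_add ((hv t ht).fun_pow 2)).fun_mul hinv.exp |>.congr_deriv ?_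
    field_simp
    ring
  refine antitoneOn_of_hasDerivWithinAt_nonpos (convex_Ioi 0)
    (fun t ht => (hW t ht).continuousAt.continuousWithinAt)
    (fun t ht => (hW t (interior_subset ht)).hasDerivWithinAt) fun t ht => ?_
  rw [interior_Ioi] at ht
  have hkey : 0 ≤ 2 * c * u t * v t + |c| * (u t ^ 2 + v t ^ 2) := by
    rcases abs_cases c with ⟨h, -⟩ | ⟨h, -⟩ <;> rw [h]
    · nlinarith [mul_nonneg (abs_nonneg c) (sq_nonneg (u t + v t)), h]
    · nlinarith [mul_nonneg (abs_nonneg c) (sq_nonneg (u t - v t)), h]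
  exact mul_nonpos_of_nonpos_of_nonneg (neg_nonpos.2 (by positivity)) hkey

lemma exists_abs_le_of_perturbedOscillator {u v : ℝ → ℝ} {c : ℝ}
    (hu : ∀ t > 0, HasDerivAt u (v t) t) (hv : ∀ t > 0, HasDerivAt v (-(1 + c / t ^ 2) * u t) t) :
    ∃ B, ∀ t ≥ 1, |u t| ≤ B := by
  refine ⟨√((u 1 ^ 2 + v 1 ^ 2) * exp |c|), fun t ht => Real.abs_le_sqrt ?_⟩
  have hW := antitoneOn_perturbedOscillator_energy hu hv (mem_Ioi.2 one_pos)
    (mem_Ioi.2 (by linarith)) ht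
  simp only [div_one] at hW
  calc u t ^ 2 ≤ (u t ^ 2 + v t ^ 2) * exp (|c| / t) := by
        nlinarith [one_le_exp (by positivity : 0 ≤ |c| / t), sq_nonneg (v t), sq_nonneg (u t)]
    _ ≤ _ := hW

lemma hasDerivAt_sqrt_mul_besselJ (n : ℕ) {t : ℝ} (ht : 0 < t) :
    HasDerivAt (fun t => √t * besselJ n t)
      (besselJ n t / (2 * √t) + √t * besselJDeriv 1 n t) t :=
  ((hasDerivAt_sqrt ht.ne').mul (hasDerivAt_besselJ n t)).congr_deriv (by ring)

/-- In the Liouville normal form `u = √t J_n`, Bessel's equation reads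
`u'' = -(1 + (1/4 - n²) / t²) u`. -/
lemma hasDerivAt_sqrt_mul_besselJ_deriv (n : ℕ) {t : ℝ} (ht : 0 < t) :
    HasDerivAt (fun t => besselJ n t / (2 * √t) + √t * besselJDeriv 1 n t)
      (-(1 + (1 / 4 - n ^ 2) / t ^ 2) * (√t * besselJ n t)) t := by
  obtain ⟨s, hs, rfl⟩ : ∃ s > 0, t = s ^ 2 := ⟨√t, sqrt_pos.2 ht, (sq_sqrt ht.le).symm⟩
  have hs2 : s ^ 2 ≠ 0 := by positivity
  refine (((hasDerivAt_besselJ n _).div ((hasDerivAt_sqrt hs2).const_mul 2) (by positivity)).add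
    ((hasDerivAt_sqrt hs2).mul (hasDerivAt_besselJDeriv 1 n _))).congr_deriv ?_
  rw [sqrt_sq hs.le, show 1 + 1 = 2 from rfl]
  field_simp
  linear_combination 16 * besselJ_ode n (s ^ 2)

lemma exists_abs_besselJ_le (n : ℕ) : ∃ C, ∀ t > 0, |besselJ n t| ≤ C / √t := by
  have hcont : Continuous (besselJ n) :=
    continuous_iff_continuousAt.2 fun t => (hasDerivAt_besselJ n t).continuousAt
  obtain ⟨B, hB⟩ := (isCompact_Icc (a := (0 : ℝ)) (b := 1)).exists_bound_of_continuousOn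
    hcont.continuousOn
  obtain ⟨A, hA⟩ := exists_abs_le_of_perturbedOscillator
    (fun t ht => hasDerivAt_sqrt_mul_besselJ n ht)
    (fun t ht => hasDerivAt_sqrt_mul_besselJ_deriv n ht)
  refine ⟨max A B, fun t ht => ?_⟩
  rw [le_div_iff₀ (sqrt_pos.2 ht)]
  rcases le_total t 1 with h1 | h1
  · have hJ := hB t ⟨ht.le, h1⟩
    rw [Real.norm_eq_abs] at hJ
    calc |besselJ n t| * √t ≤ B * 1 := by
          gcongr
          · exact (abs_nonneg _).trans hJ
          · exact sqrt_le_one.2 h1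
      _ ≤ max A B := by rw [mul_one]; exact le_max_right _ _
  · have hJ := hA t h1
    rw [abs_mul, abs_of_nonneg (sqrt_nonneg t), mul_comm] at hJ
    exact hJ.trans (le_max_left _ _)

lemma exists_enorm_besselJ_le (n : ℕ) :
    ∃ C : ℝ≥0∞, C ≠ ⊤ ∧ ∀ t ≥ 0, ‖besselJ n t‖ₑ ≤ C * (ENNReal.ofReal t)⁻¹ ^ (1 / 2 : ℝ) := by
  obtain ⟨C, hC⟩ := exists_abs_besselJ_le n
  refine ⟨ENNReal.ofReal C + 1, by finiteness, fun t ht => ?_⟩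
  rcases ht.eq_or_lt with rfl | ht
  · simp [ENNReal.top_rpow_of_pos]
  calc ‖besselJ n t‖ₑ ≤ ENNReal.ofReal (C / √t) := by
        rw [Real.enorm_eq_ofReal_abs]
        exact ENNReal.ofReal_le_ofReal (hC t ht)
    _ = ENNReal.ofReal C * (ENNReal.ofReal t)⁻¹ ^ (1 / 2 : ℝ) := by
        rw [div_eq_mul_inv, ENNReal.ofReal_mul' (by positivity), ← sqrt_inv, sqrt_eq_rpow,
          ← ENNReal.ofReal_rpow_of_pos (inv_pos.2 ht), ENNReal.ofReal_inv_of_pos ht]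
    _ ≤ _ := by gcongr; exact le_self_add

/-- `d(x, y)^(-s)`, valued in `ℝ≥0∞` so that it is `∞` on the diagonal for `s > 0`. -/
noncomputable def rieszKernel {X : Type*} [PseudoEMetricSpace X] (s : ℝ) (x y : X) : ℝ≥0∞ :=
  (edist x y)⁻¹ ^ s

section PseudoEMetricSpace

variable {X : Type*} [PseudoEMetricSpace X]

lemma rieszKernel_comm (s : ℝ) (x y : X) : rieszKernel s x y = rieszKernel s y x := by
  rw [rieszKernel, rieszKernel, edist_comm]

@[simp] lemma rieszKernel_zero (x y : X) : rieszKernel 0 x y = 1 := ENNReal.rpow_zero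

lemma rieszKernel_add {s t : ℝ} (hs : 0 ≤ s) (ht : 0 ≤ t) (x y : X) :
    rieszKernel (s + t) x y = rieszKernel s x y * rieszKernel t x y :=
  ENNReal.rpow_add_of_nonneg _ _ hs ht

lemma rieszKernel_anti {s : ℝ} (hs : 0 ≤ s) {x y x' y' : X} (h : edist x y ≤ edist x' y') :
    rieszKernel s x' y' ≤ rieszKernel s x y :=
  ENNReal.rpow_le_rpow (ENNReal.inv_le_inv.2 h) hs

lemma rieszKernel_le_one {s : ℝ} (hs : 0 ≤ s) {x y : X} (h : 1 ≤ edist x y) :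
    rieszKernel s x y ≤ 1 :=
  ENNReal.rpow_le_one (ENNReal.inv_le_one.2 h) hs

/-- Where `d(x, a) ≤ d(x, c)` one has `d(a, c) ≤ 2 d(x, c)`: a part `θ` of the singularity at `c`
is traded for the factor `(d(a, c) / 2)^(-θ)`, and the rest is moved to `a`. -/
lemma rieszKernel_mul_rieszKernel_le {s t θ : ℝ} (hθ : 0 ≤ θ) (hθs : θ ≤ s) (hθt : θ ≤ t)
    (x a c : X) :
    rieszKernel s x a * rieszKernel t x c ≤
      2 ^ θ * rieszKernel θ a c * (rieszKernel (s + t - θ) x a + rieszKernel (s + t - θ) x c) := by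
  wlog hac : edist x a ≤ edist x c generalizing s t a c
  · have := this hθt hθs c a (le_of_not_ge hac)
    rwa [rieszKernel_comm θ c a, add_comm t s, add_comm (rieszKernel _ x c), mul_comm] at this
  have hc : rieszKernel θ x c ≤ 2 ^ θ * rieszKernel θ a c := by
    have h : edist a c ≤ edist x c * 2 :=
      (edist_triangle_left a c x).trans (by rw [mul_two]; gcongr)
    rw [rieszKernel, rieszKernel, ← ENNReal.mul_rpow_of_nonneg _ _ hθ]
    gcongr
    calc (edist x c)⁻¹ ≤ (edist a c / 2)⁻¹ :=
          ENNReal.inv_le_inv.2 ((ENNReal.div_le_iff_le_mul (by simp) (by simp)).2 h)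
      _ = 2 * (edist a c)⁻¹ := by rw [ENNReal.inv_div (by simp) (by simp), div_eq_mul_inv]
  calc rieszKernel s x a * rieszKernel t x c
      = rieszKernel s x a * (rieszKernel θ x c * rieszKernel (t - θ) x c) := by
        rw [← rieszKernel_add hθ (by linarith), add_sub_cancel]
    _ ≤ rieszKernel s x a * (2 ^ θ * rieszKernel θ a c * rieszKernel (t - θ) x a) := by
        gcongr
        exact rieszKernel_anti (by linarith) hac
    _ = 2 ^ θ * rieszKernel θ a c * rieszKernel (s + t - θ) x a := by
        rw [add_sub_assoc, rieszKernel_add (by linarith) (by linarith)]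
        ring
    _ ≤ _ := by gcongr; exact le_self_add

end PseudoEMetricSpace

lemma rieszKernel_eq_ofReal {X : Type*} [MetricSpace X] (s : ℝ) {x y : X} (h : x ≠ y) :
    rieszKernel s x y = ENNReal.ofReal (dist x y ^ (-s)) := by
  have hd : 0 < dist x y := dist_pos.2 h
  rw [rieszKernel, edist_dist, ← ENNReal.ofReal_inv_of_pos hd,
    ENNReal.ofReal_rpow_of_pos (inv_pos.2 hd), Real.rpow_neg hd.le, Real.inv_rpow hd.le]

lemma inv_ofReal_mul_norm_sub_rpow {E : Type*} [NormedAddCommGroup E] {l : ℝ} (hl : 0 < l)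
    {p : ℝ} (hp : 0 ≤ p) (x y : E) :
    (ENNReal.ofReal (l * ‖x - y‖))⁻¹ ^ p = (ENNReal.ofReal l)⁻¹ ^ p * rieszKernel p x y := by
  rw [ENNReal.ofReal_mul hl.le, ofReal_norm, ← edist_eq_enorm_sub,
    ENNReal.mul_inv (Or.inl (by simpa using hl)) (Or.inl ENNReal.ofReal_ne_top),
    ENNReal.mul_rpow_of_nonneg _ _ hp, rieszKernel]

section Normed

variable {E : Type*} [NormedAddCommGroup E] [MeasurableSpace E]

noncomputable def rieszConst (μ : Measure E) (D : Set E) (s : ℝ) : ℝ≥0∞ :=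
  ∫⁻ x in closedBall 0 1, rieszKernel s x 0 ∂μ + μ D

variable [BorelSpace E]

@[fun_prop]
lemma measurable_rieszKernel_left (s : ℝ) (a : E) : Measurable fun x => rieszKernel s x a := by
  unfold rieszKernel
  fun_prop

@[fun_prop]
lemma measurable_rieszKernel_right (s : ℝ) (a : E) : Measurable fun x => rieszKernel s a x := by
  simp_rw [rieszKernel_comm s a]
  fun_prop

variable {μ : Measure E} [μ.IsAddRightInvariant]

/-- Outside the unit ball around `a` the kernel is at most `1`; inside, translate `a` to `0`. -/
lemma setLIntegral_rieszKernel_le {s : ℝ} (hs : 0 ≤ s) (D : Set E) (a : E) :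
    ∫⁻ x in D, rieszKernel s x a ∂μ ≤ rieszConst μ D s := by
  calc ∫⁻ x in D, rieszKernel s x a ∂μ
      ≤ ∫⁻ x in D, (closedBall a 1).indicator (rieszKernel s · a) x + 1 ∂μ := by
        refine lintegral_mono fun x => ?_
        by_cases hx : x ∈ closedBall a 1
        · simp [hx]
        · rw [indicator_of_notMem hx, zero_add]
          refine rieszKernel_le_one hs ?_
          rw [mem_closedBall, not_le, ← ENNReal.ofReal_lt_ofReal_iff_of_nonneg zero_le_one] at hx
          simpa [edist_dist] using hx.le
    _ ≤ ∫⁻ x, (closedBall a 1).indicator (rieszKernel s · a) x ∂μ + μ D := by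
        rw [lintegral_add_right _ measurable_const, setLIntegral_one]
        gcongr
        exact Measure.restrict_le_self
    _ = rieszConst μ D s := by
        rw [rieszConst, ← lintegral_add_right_eq_self _ a,
          ← lintegral_indicator measurableSet_closedBall]
        congr 2 with x
        simp [indicator, rieszKernel, edist_eq_enorm_sub]

lemma setLIntegral_rieszKernel_mul_le {s t θ : ℝ} (hθ : 0 ≤ θ) (hθs : θ ≤ s) (hθt : θ ≤ t)
    (D : Set E) (a c : E) :
    ∫⁻ x in D, rieszKernel s x a * rieszKernel t x c ∂μ ≤
      2 ^ θ * rieszKernel θ a c * (2 * rieszConst μ D (s + t - θ)) := by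
  have hσ : 0 ≤ s + t - θ := by linarith
  calc ∫⁻ x in D, rieszKernel s x a * rieszKernel t x c ∂μ
      ≤ ∫⁻ x in D, 2 ^ θ * rieszKernel θ a c *
          (rieszKernel (s + t - θ) x a + rieszKernel (s + t - θ) x c) ∂μ :=
        lintegral_mono fun x => rieszKernel_mul_rieszKernel_le hθ hθs hθt x a c
    _ = 2 ^ θ * rieszKernel θ a c * (∫⁻ x in D, rieszKernel (s + t - θ) x a ∂μ +
          ∫⁻ x in D, rieszKernel (s + t - θ) x c ∂μ) := by
        rw [lintegral_const_mul _ (by fun_prop), lintegral_add_left (by fun_prop)]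
    _ ≤ _ := by
        rw [two_mul]
        gcongr <;> exact setLIntegral_rieszKernel_le hσ D _

end Normed

section AddHaar

variable {E : Type*} [NormedAddCommGroup E] [NormedSpace ℝ E] [FiniteDimensional ℝ E]
  [MeasurableSpace E] [BorelSpace E] {μ : Measure E} [μ.IsAddHaarMeasure]

lemma lintegral_closedBall_rieszKernel_lt_top {s : ℝ} (hs0 : 0 ≤ s)
    (hs : s < Module.finrank ℝ E) (r : ℝ) :
    ∫⁻ x in closedBall 0 r, rieszKernel s x 0 ∂μ < ⊤ := by
  have hd : 1 ≤ Module.finrank ℝ E := by exact_mod_cast hs0.trans_lt hs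
  have : Nontrivial E := Module.nontrivial_of_finrank_pos (R := ℝ) hd
  have hint : IntegrableOn (fun x : E => ‖x‖ ^ (-s)) (closedBall 0 r) μ :=
    (integrableOn_ball_of_norm_le_rpow (r := r + 1) hd hs
      (Eventually.of_forall fun x => by
        rw [one_mul, Real.norm_of_nonneg (Real.rpow_nonneg (norm_nonneg _) _)])
      (measurable_norm.pow_const _).aestronglyMeasurable).mono_set
      (closedBall_subset_ball (by linarith))
  refine lt_of_eq_of_lt (lintegral_congr_ae ?_) hint.lintegral_lt_top
  filter_upwards [ae_restrict_of_ae (Measure.ae_ne μ 0)] with x hx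
  rw [rieszKernel_eq_ofReal s hx, dist_zero_right]

lemma rieszConst_ne_top {D : Set E} (hD : μ D ≠ ⊤) {s : ℝ} (hs0 : 0 ≤ s)
    (hs : s < Module.finrank ℝ E) : rieszConst μ D s ≠ ⊤ :=
  (ENNReal.add_lt_top.2 ⟨lintegral_closedBall_rieszKernel_lt_top hs0 hs 1, hD.lt_top⟩).ne

theorem lintegral_rieszKernel_triangle_lt_top {D : Set E} (hD : μ D ≠ ⊤) {s₁ s₂ s₃ : ℝ}
    (hs₁ : 0 ≤ s₁) (hs₂ : 0 ≤ s₂) (hs₃ : 0 ≤ s₃) (h₁ : s₁ < Module.finrank ℝ E)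
    (h₂₃ : s₂ + s₃ < Module.finrank ℝ E) :
    ∫⁻ x₁ in D, ∫⁻ x₂ in D, ∫⁻ x₃ in D,
      rieszKernel s₁ x₁ x₂ * rieszKernel s₂ x₂ x₃ * rieszKernel s₃ x₃ x₁ ∂μ ∂μ ∂μ < ⊤ := by
  set K := rieszConst μ D
  have hx₃ : ∀ x₁ x₂, ∫⁻ x₃ in D, rieszKernel s₂ x₂ x₃ * rieszKernel s₃ x₃ x₁ ∂μ ≤
      2 * K (s₂ + s₃) := fun x₁ x₂ => by
    simp_rw [rieszKernel_comm s₂ x₂]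
    simpa using setLIntegral_rieszKernel_mul_le le_rfl hs₂ hs₃ D x₂ x₁ (μ := μ)
  have hx₂ : ∀ x₁, ∫⁻ x₂ in D, rieszKernel s₁ x₁ x₂ ∂μ ≤ K s₁ := fun x₁ => by
    simp_rw [rieszKernel_comm s₁ x₁]
    exact setLIntegral_rieszKernel_le hs₁ D x₁
  calc _ ≤ ∫⁻ x₁ in D, ∫⁻ x₂ in D, rieszKernel s₁ x₁ x₂ * (2 * K (s₂ + s₃)) ∂μ ∂μ := by
        gcongr with x₁ x₂
        simp_rw [mul_assoc]
        rw [lintegral_const_mul _ (by fun_prop)]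
        gcongr
        exact hx₃ x₁ x₂
    _ ≤ ∫⁻ _ in D, K s₁ * (2 * K (s₂ + s₃)) ∂μ := by
        gcongr with x₁
        rw [lintegral_mul_const _ (by fun_prop)]
        gcongr
        exact hx₂ x₁
    _ = K s₁ * (2 * K (s₂ + s₃)) * μ D := setLIntegral_const _ _
    _ < ⊤ := by
        finiteness [rieszConst_ne_top hD hs₁ h₁, rieszConst_ne_top hD (by linarith) h₂₃]

theorem lintegral_rieszKernel_cycle_lt_top {D : Set E} (hD : μ D ≠ ⊤) {s₁ s₂ s₃ s₄ θ : ℝ}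
    (hs₁ : 0 ≤ s₁) (hs₂ : 0 ≤ s₂) (hθ : 0 ≤ θ) (hθ₃ : θ ≤ s₃) (hθ₄ : θ ≤ s₄)
    (h₁ : s₁ < Module.finrank ℝ E) (h₂ : s₂ + θ < Module.finrank ℝ E)
    (h₃₄ : s₃ + s₄ - θ < Module.finrank ℝ E) :
    ∫⁻ x₁ in D, ∫⁻ x₂ in D, ∫⁻ x₃ in D, ∫⁻ x₄ in D,
      rieszKernel s₁ x₁ x₂ * rieszKernel s₂ x₂ x₃ * rieszKernel s₃ x₃ x₄ * rieszKernel s₄ x₄ x₁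
        ∂μ ∂μ ∂μ ∂μ < ⊤ := by
  set c := 2 ^ θ * (2 * rieszConst μ D (s₃ + s₄ - θ))
  have hc : c ≠ ⊤ := by
    have : (2 : ℝ≥0∞) ^ θ ≠ ⊤ := ENNReal.rpow_ne_top_of_nonneg hθ (by simp)
    finiteness [rieszConst_ne_top hD (by linarith) h₃₄]
  have hx₄ : ∀ x₁ x₃, ∫⁻ x₄ in D, rieszKernel s₃ x₃ x₄ * rieszKernel s₄ x₄ x₁ ∂μ ≤
      c * rieszKernel θ x₃ x₁ := fun x₁ x₃ => by
    simp_rw [rieszKernel_comm s₃ x₃]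
    exact (setLIntegral_rieszKernel_mul_le hθ hθ₃ hθ₄ D x₃ x₁).trans_eq (by ring)
  calc _ ≤ ∫⁻ x₁ in D, ∫⁻ x₂ in D, ∫⁻ x₃ in D, c * (rieszKernel s₁ x₁ x₂ *
          rieszKernel s₂ x₂ x₃ * rieszKernel θ x₃ x₁) ∂μ ∂μ ∂μ := by
        gcongr with x₁ x₂ x₃
        simp_rw [mul_assoc (rieszKernel s₁ x₁ x₂ * rieszKernel s₂ x₂ x₃)]
        rw [lintegral_const_mul _ (by fun_prop)]
        calc _ ≤ rieszKernel s₁ x₁ x₂ * rieszKernel s₂ x₂ x₃ * (c * rieszKernel θ x₃ x₁) := by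
              gcongr
              exact hx₄ x₁ x₃
          _ = _ := by ring
    _ = c * ∫⁻ x₁ in D, ∫⁻ x₂ in D, ∫⁻ x₃ in D, rieszKernel s₁ x₁ x₂ *
          rieszKernel s₂ x₂ x₃ * rieszKernel θ x₃ x₁ ∂μ ∂μ ∂μ := by
        simp only [lintegral_const_mul' _ _ hc]
    _ < ⊤ := ENNReal.mul_lt_top hc.lt_top
        (lintegral_rieszKernel_triangle_lt_top hD hs₁ hs₂ hθ h₁ h₂)

end AddHaar

lemma lintegral_rieszKernel_cycle_half_lt_top {D : Set (EuclideanSpace ℝ (Fin 2))}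
    (hD : volume D ≠ ⊤) {b₁ b₂ b₃ b₄ : ℕ} (hb₁ : 1 ≤ b₁) (hb₁' : b₁ ≤ 3) (hb₂' : b₂ ≤ 3)
    (hb₃' : b₃ ≤ 3) (hb₄' : b₄ ≤ 3) (hsum : b₁ + b₂ + b₃ + b₄ = 8) :
    ∫⁻ x₁ in D, ∫⁻ x₂ in D, ∫⁻ x₃ in D, ∫⁻ x₄ in D,
      rieszKernel ((b₁ : ℝ) / 2) x₁ x₂ * rieszKernel ((b₂ : ℝ) / 2) x₂ x₃ *
        rieszKernel ((b₃ : ℝ) / 2) x₃ x₄ * rieszKernel ((b₄ : ℝ) / 2) x₄ x₁ < ⊤ := by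
  have hb : (b₁ : ℝ) + b₂ + b₃ + b₄ = 8 := by exact_mod_cast hsum
  have h₁ : (1 : ℝ) ≤ b₁ := by exact_mod_cast hb₁
  have h₁' : (b₁ : ℝ) ≤ 3 := by exact_mod_cast hb₁'
  have h₂' : (b₂ : ℝ) ≤ 3 := by exact_mod_cast hb₂'
  have h₃' : (b₃ : ℝ) ≤ 3 := by exact_mod_cast hb₃'
  have h₄' : (b₄ : ℝ) ≤ 3 := by exact_mod_cast hb₄'
  -- for `θ = max (s₃ + s₄ - 7/4) 0` both `s₃ + s₄ - θ` and `s₂ + θ` are at most `7/4 < 2`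
  have hθ := max_cases ((b₃ : ℝ) / 2 + b₄ / 2 - 7 / 4) 0
  refine lintegral_rieszKernel_cycle_lt_top hD (θ := max ((b₃ : ℝ) / 2 + b₄ / 2 - 7 / 4) 0)
    (by positivity) (by positivity) (le_max_right _ _) (max_le (by linarith) (by positivity))
    (max_le (by linarith) (by positivity)) ?_ ?_ ?_ <;>
  · rw [finrank_euclideanSpace_fin]
    push_cast
    rcases hθ with ⟨h, h'⟩ | ⟨h, h'⟩ <;> linarith

lemma enorm_abs_pow_le_of_enorm_le {x : ℝ} {C X : ℝ≥0∞} (h : ‖x‖ₑ ≤ C * X ^ (1 / 2 : ℝ))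
    (b : ℕ) : ‖|x| ^ b‖ₑ ≤ C ^ b * X ^ ((b : ℝ) / 2) := by
  calc ‖|x| ^ b‖ₑ = ‖x‖ₑ ^ b := by simp [enorm_pow]
    _ ≤ (C * X ^ (1 / 2 : ℝ)) ^ b := by gcongr
    _ = C ^ b * X ^ ((b : ℝ) / 2) := by
        rw [mul_pow, ← ENNReal.rpow_natCast (X ^ _), ← ENNReal.rpow_mul]
        ring_nf

lemma enorm_integral_cycle_le {E : Type*} [NormedAddCommGroup E] [MeasurableSpace E]
    {μ : Measure E} {D : Set E} {g₁ g₂ g₃ g₄ : ℝ → ℝ} {C₁ C₂ C₃ C₄ : ℝ≥0∞} {p₁ p₂ p₃ p₄ : ℝ}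
    (hC₁ : C₁ ≠ ⊤) (hC₂ : C₂ ≠ ⊤) (hC₃ : C₃ ≠ ⊤) (hC₄ : C₄ ≠ ⊤)
    (hp₁ : 0 ≤ p₁) (hp₂ : 0 ≤ p₂) (hp₃ : 0 ≤ p₃) (hp₄ : 0 ≤ p₄)
    (hg₁ : ∀ t ≥ 0, ‖g₁ t‖ₑ ≤ C₁ * (ENNReal.ofReal t)⁻¹ ^ p₁)
    (hg₂ : ∀ t ≥ 0, ‖g₂ t‖ₑ ≤ C₂ * (ENNReal.ofReal t)⁻¹ ^ p₂)
    (hg₃ : ∀ t ≥ 0, ‖g₃ t‖ₑ ≤ C₃ * (ENNReal.ofReal t)⁻¹ ^ p₃)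
    (hg₄ : ∀ t ≥ 0, ‖g₄ t‖ₑ ≤ C₄ * (ENNReal.ofReal t)⁻¹ ^ p₄) {l : ℝ} (hl : 0 < l) :
    ‖∫ x₁ in D, ∫ x₂ in D, ∫ x₃ in D, ∫ x₄ in D,
      g₁ (l * ‖x₁ - x₂‖) * g₂ (l * ‖x₂ - x₃‖) * g₃ (l * ‖x₃ - x₄‖) * g₄ (l * ‖x₄ - x₁‖)
        ∂μ ∂μ ∂μ ∂μ‖ₑ ≤
      C₁ * C₂ * C₃ * C₄ * (ENNReal.ofReal l)⁻¹ ^ (p₁ + p₂ + p₃ + p₄) *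
        ∫⁻ x₁ in D, ∫⁻ x₂ in D, ∫⁻ x₃ in D, ∫⁻ x₄ in D,
          rieszKernel p₁ x₁ x₂ * rieszKernel p₂ x₂ x₃ * rieszKernel p₃ x₃ x₄ *
            rieszKernel p₄ x₄ x₁ ∂μ ∂μ ∂μ ∂μ := by
  set L := (ENNReal.ofReal l)⁻¹
  have hc : C₁ * C₂ * C₃ * C₄ * L ^ (p₁ + p₂ + p₃ + p₄) ≠ ⊤ := by
    have := ENNReal.rpow_ne_top_of_nonneg (by positivity : 0 ≤ p₁ + p₂ + p₃ + p₄)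
      (ENNReal.inv_ne_top.2 (ENNReal.ofReal_pos.2 hl).ne')
    finiteness
  have hg : ∀ {g : ℝ → ℝ} {C : ℝ≥0∞} {p : ℝ}, 0 ≤ p →
      (∀ t ≥ 0, ‖g t‖ₑ ≤ C * (ENNReal.ofReal t)⁻¹ ^ p) →
      ∀ x y : E, ‖g (l * ‖x - y‖)‖ₑ ≤ C * L ^ p * rieszKernel p x y := fun hp hg x y => by
    rw [mul_assoc, ← inv_ofReal_mul_norm_sub_rpow hl hp]
    exact hg _ (by positivity)
  calc _ ≤ ∫⁻ x₁ in D, ∫⁻ x₂ in D, ∫⁻ x₃ in D, ∫⁻ x₄ in D,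
          C₁ * C₂ * C₃ * C₄ * L ^ (p₁ + p₂ + p₃ + p₄) * (rieszKernel p₁ x₁ x₂ *
            rieszKernel p₂ x₂ x₃ * rieszKernel p₃ x₃ x₄ * rieszKernel p₄ x₄ x₁) ∂μ ∂μ ∂μ ∂μ := by
        refine (enorm_integral_le_lintegral_enorm _).trans <| lintegral_mono fun x₁ =>
          (enorm_integral_le_lintegral_enorm _).trans <| lintegral_mono fun x₂ =>
          (enorm_integral_le_lintegral_enorm _).trans <| lintegral_mono fun x₃ =>
          (enorm_integral_le_lintegral_enorm _).trans <| lintegral_mono fun x₄ => ?_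
        simp only [enorm_mul]
        calc _ ≤ C₁ * L ^ p₁ * rieszKernel p₁ x₁ x₂ * (C₂ * L ^ p₂ * rieszKernel p₂ x₂ x₃) *
              (C₃ * L ^ p₃ * rieszKernel p₃ x₃ x₄) * (C₄ * L ^ p₄ * rieszKernel p₄ x₄ x₁) := by
              gcongr <;> apply hg <;> assumption
          _ = _ := by
              rw [ENNReal.rpow_add_of_nonneg _ _ (by positivity) hp₄,
                ENNReal.rpow_add_of_nonneg _ _ (by positivity) hp₃,
                ENNReal.rpow_add_of_nonneg _ _ hp₁ hp₂]
              ring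
    _ = _ := by simp only [lintegral_const_mul' _ _ hc]

lemma exists_norm_integral_besselJ_cycle_le {D : Set (EuclideanSpace ℝ (Fin 2))}
    (hD : volume D ≠ ⊤) (a₁ a₂ a₃ a₄ : ℕ) {b₁ b₂ b₃ b₄ : ℕ} (hb₁ : 1 ≤ b₁) (hb₁' : b₁ ≤ 3)
    (hb₂' : b₂ ≤ 3) (hb₃' : b₃ ≤ 3) (hb₄' : b₄ ≤ 3) (hsum : b₁ + b₂ + b₃ + b₄ = 8) :
    ∃ A, ∀ l > 0, ‖∫ x₁ in D, ∫ x₂ in D, ∫ x₃ in D, ∫ x₄ in D,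
      |besselJ a₁ (l * ‖x₁ - x₂‖)| ^ b₁ * |besselJ a₂ (l * ‖x₂ - x₃‖)| ^ b₂ *
        |besselJ a₃ (l * ‖x₃ - x₄‖)| ^ b₃ * |besselJ a₄ (l * ‖x₄ - x₁‖)| ^ b₄‖ ≤ A / l ^ 4 := by
  obtain ⟨C₁, hC₁, hJ₁⟩ := exists_enorm_besselJ_le a₁
  obtain ⟨C₂, hC₂, hJ₂⟩ := exists_enorm_besselJ_le a₂
  obtain ⟨C₃, hC₃, hJ₃⟩ := exists_enorm_besselJ_le a₃
  obtain ⟨C₄, hC₄, hJ₄⟩ := exists_enorm_besselJ_le a₄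
  obtain ⟨Γ, hΓ⟩ : ∃ Γ : NNReal, (Γ : ℝ≥0∞) = _ := ⟨_, ENNReal.coe_toNNReal
    (lintegral_rieszKernel_cycle_half_lt_top hD hb₁ hb₁' hb₂' hb₃' hb₄' hsum).ne⟩
  refine ⟨(C₁ ^ b₁ * C₂ ^ b₂ * C₃ ^ b₃ * C₄ ^ b₄ * Γ).toReal, fun l hl => ?_⟩
  have h := enorm_integral_cycle_le (ENNReal.pow_ne_top hC₁) (ENNReal.pow_ne_top hC₂)
    (ENNReal.pow_ne_top hC₃) (ENNReal.pow_ne_top hC₄) (by positivity) (by positivity)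
    (by positivity) (by positivity)
    (fun t ht => enorm_abs_pow_le_of_enorm_le (hJ₁ t ht) b₁)
    (fun t ht => enorm_abs_pow_le_of_enorm_le (hJ₂ t ht) b₂)
    (fun t ht => enorm_abs_pow_le_of_enorm_le (hJ₃ t ht) b₃)
    (fun t ht => enorm_abs_pow_le_of_enorm_le (hJ₄ t ht) b₄) hl (D := D) (μ := volume)
  have hb : (b₁ : ℝ) + b₂ + b₃ + b₄ = 8 := by exact_mod_cast hsum
  rw [show (b₁ : ℝ) / 2 + b₂ / 2 + b₃ / 2 + b₄ / 2 = (4 : ℕ) by push_cast; linarith,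
    ENNReal.rpow_natCast, ← hΓ] at h
  have hL : (ENNReal.ofReal l)⁻¹ ≠ ⊤ := ENNReal.inv_ne_top.2 (by simpa using hl)
  rw [← toReal_enorm]
  refine (ENNReal.toReal_mono (by finiteness) h).trans_eq ?_
  simp only [ENNReal.toReal_mul, ENNReal.toReal_pow, ENNReal.toReal_inv,
    ENNReal.toReal_ofReal hl.le, ENNReal.coe_toReal]
  ring

theorem contraction_integral_tendsto_zero_general
    (D : Set (EuclideanSpace ℝ (Fin 2))) (hDcomp : IsCompact D)
    (a₁ a₂ a₃ a₄ : ℕ)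
    (b₁ b₂ b₃ b₄ : ℕ)
    (hb₁ : 1 ≤ b₁)
    (hb₁' : b₁ ≤ 3) (hb₂' : b₂ ≤ 3) (hb₃' : b₃ ≤ 3) (hb₄' : b₄ ≤ 3)
    (hsum : b₁ + b₂ + b₃ + b₄ = 8) :
    Tendsto (fun E : ℝ =>
        (E ^ 2 / (Real.log E) ^ 2) *
          ∫ x₁ in D, ∫ x₂ in D, ∫ x₃ in D, ∫ x₄ in D,
            |besselJ a₁ (2 * Real.pi * Real.sqrt E * ‖x₁ - x₂‖)| ^ b₁ *
            |besselJ a₂ (2 * Real.pi * Real.sqrt E * ‖x₂ - x₃‖)| ^ b₂ *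
            |besselJ a₃ (2 * Real.pi * Real.sqrt E * ‖x₃ - x₄‖)| ^ b₃ *
            |besselJ a₄ (2 * Real.pi * Real.sqrt E * ‖x₄ - x₁‖)| ^ b₄)
      atTop (nhds 0) := by
  obtain ⟨A, hA⟩ := exists_norm_integral_besselJ_cycle_le hDcomp.measure_lt_top.ne a₁ a₂ a₃ a₄
    hb₁ hb₁' hb₂' hb₃' hb₄' hsum
  have hlim : Tendsto (fun E => A / (16 * π ^ 4) / log E ^ 2) atTop (nhds 0) :=
    tendsto_const_nhds.div_atTop ((tendsto_pow_atTop two_ne_zero).comp tendsto_log_atTop)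
  refine squeeze_zero_norm' ?_ hlim
  filter_upwards [eventually_gt_atTop 0] with E hE
  have hl4 : (2 * π * √E) ^ 4 = 16 * π ^ 4 * E ^ 2 := by
    rw [mul_pow, show √E ^ 4 = (√E ^ 2) ^ 2 by ring, sq_sqrt hE.le]
    ring
  rw [norm_mul, Real.norm_of_nonneg (by positivity)]
  calc _ ≤ E ^ 2 / log E ^ 2 * (A / (2 * π * √E) ^ 4) := by gcongr; exact hA _ (by positivity)
    _ = A / (16 * π ^ 4) / log E ^ 2 := by
        rw [hl4]
        field_simp

/-- Contraction bound: for exponents `1 ≤ bᵢ ≤ 3` with `b₁+b₂+b₃+b₄ = 8` and Bessel orders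
`aᵢ ∈ {0,1,2}`, the renormalized fourfold cyclic integral
`u_E = (E²/log²E) ∫_{D⁴} ∏ |J_{aᵢ}(2π√E‖xᵢ − xᵢ₊₁‖)|^{bᵢ} dx` tends to `0` as `E → ∞`,
where `D ⊂ ℝ²` is a convex body. -/
theorem contraction_integral_tendsto_zero
    (D : Set (EuclideanSpace ℝ (Fin 2))) (hDcomp : IsCompact D) (hDconv : Convex ℝ D)
    (hDint : (interior D).Nonempty)
    (a₁ a₂ a₃ a₄ : ℕ) (ha₁ : a₁ ≤ 2) (ha₂ : a₂ ≤ 2) (ha₃ : a₃ ≤ 2) (ha₄ : a₄ ≤ 2)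
    (b₁ b₂ b₃ b₄ : ℕ)
    (hb₁ : 1 ≤ b₁) (hb₂ : 1 ≤ b₂) (hb₃ : 1 ≤ b₃) (hb₄ : 1 ≤ b₄)
    (hb₁' : b₁ ≤ 3) (hb₂' : b₂ ≤ 3) (hb₃' : b₃ ≤ 3) (hb₄' : b₄ ≤ 3)
    (hsum : b₁ + b₂ + b₃ + b₄ = 8) :
    Tendsto (fun E : ℝ =>
        (E ^ 2 / (Real.log E) ^ 2) *
          ∫ x₁ in D, ∫ x₂ in D, ∫ x₃ in D, ∫ x₄ in D,
            |besselJ a₁ (2 * Real.pi * Real.sqrt E * ‖x₁ - x₂‖)| ^ b₁ *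
            |besselJ a₂ (2 * Real.pi * Real.sqrt E * ‖x₂ - x₃‖)| ^ b₂ *
            |besselJ a₃ (2 * Real.pi * Real.sqrt E * ‖x₃ - x₄‖)| ^ b₃ *
            |besselJ a₄ (2 * Real.pi * Real.sqrt E * ‖x₄ - x₁‖)| ^ b₄)
      atTop (nhds 0) :=
  contraction_integral_tendsto_zero_general D hDcomp a₁ a₂ a₃ a₄ b₁ b₂ b₃ b₄ hb₁ hb₁' hb₂' hb₃' hb₄'
    hsum
end
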